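/- Let ω_1, ω_2, ω_3 be nonzero complex numbers and set q = e^{2πiω_1/ω_2}, p = e^{2πiω_3/ω_2}, q̃ = e^{−2πiω_2/ω_1}, p̃ = e^{2πiω_3/ω_1}; assume |q| < 1, |p| < 1 and |p̃| < 1 (then also |q̃| < 1). Define G(u;ω_1,ω_2,ω_3) = ∏_{j,k=0}^∞ [(1 − e^{−2πiu/ω_2} q^{j+1} p^{k+1})(1 − e^{2πiu/ω_1} q̃^{j+1} p̃^{k})] / [(1 − e^{2πiu/ω_2} q^{j} p^{k})(1 − e^{−2πiu/ω_1} q̃^{j} p̃^{k+1})]. Then, for every u ∈ ℂ at which all the relevant denominators are nonzero, G satisfies the three difference equations: G(u+ω_1;ω) = θ(e^{2πiu/ω_2};p) · G(u;ω); G(u+ω_2;ω) = θ(e^{2πiu/ω_1};p̃) · G(u;ω); and G(u+ω_3;ω) = [θ(e^{2πiu/ω_2};q) / θ(e^{2πiu/ω_1} q̃; q̃)] · G(u;ω). -/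

import Mathlib

/-!
Write `x = e^{2πiu/ω₂}` and `y = e^{2πiu/ω₁}`. Then `G` factors as `Γ(x; q, p) · Γ(p̃/y; q̃, p̃)`,
with `Γ` the elliptic gamma function `ellGamma`, and shifting `u` by `ω₁`, `ω₂`, `ω₃` multiplies
`x` by `q`, `1`, `p` and `y` by `1`, `q̃⁻¹`, `p̃`. Everything therefore reduces to
`Γ(qz; q, p) = θ(z; p) Γ(z; q, p)` (and the same with `q` and `p` swapped, `Γ` being symmetric in
them) together with the reflection `θ(p/z; p) = θ(z; p)`. The first identity holds because `Γ` is a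
quotient of two absolutely convergent double products `∏ (1 - c qʲ pᵏ)`, and splitting off the row
`j = 0` of such a product leaves a single `q`-Pochhammer symbol `(c; p)_∞`.
-/

open scoped BigOperators
open Finset

noncomputable def qPoch (z q : ℂ) : ℂ := ∏' k : ℕ, (1 - z * q ^ k)

noncomputable def theta (z p : ℂ) : ℂ :=
  ∏' k : ℕ, ((1 - z * p ^ k) * (1 - p ^ (k + 1) / z))

noncomputable def thetaPoch (z p q : ℂ) (n : ℕ) : ℂ :=
  ∏ l ∈ Finset.range n, theta (z * q ^ l) p

noncomputable def ellGamma (z q p : ℂ) : ℂ :=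
  ∏' jk : ℕ × ℕ,
    ((1 - q ^ (jk.1 + 1) * p ^ (jk.2 + 1) / z) / (1 - z * q ^ jk.1 * p ^ jk.2))

noncomputable def torusInt : (n : ℕ) → ((Fin n → ℂ) → ℂ) → ℂ
  | 0, f => f (fun i => i.elim0)
  | n + 1, f => ∮ z in C(0, 1), (torusInt n (fun w => f (Fin.cons z w))) / z

local notation "π" => (Real.pi : ℂ)
local notation "𝕚" => Complex.I

/-- The modified elliptic gamma function `G(u;ω₁,ω₂,ω₃)`. -/
noncomputable def Gell (ω₁ ω₂ ω₃ u : ℂ) : ℂ :=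
  ∏' jk : ℕ × ℕ,
    ((1 - Complex.exp (-(2 * π * 𝕚 * u / ω₂)) * Complex.exp (2 * π * 𝕚 * ω₁ / ω₂) ^ (jk.1 + 1) *
          Complex.exp (2 * π * 𝕚 * ω₃ / ω₂) ^ (jk.2 + 1)) *
      (1 - Complex.exp (2 * π * 𝕚 * u / ω₁) * Complex.exp (-(2 * π * 𝕚 * ω₂ / ω₁)) ^ (jk.1 + 1) *
          Complex.exp (2 * π * 𝕚 * ω₃ / ω₁) ^ jk.2)) /
    ((1 - Complex.exp (2 * π * 𝕚 * u / ω₂) * Complex.exp (2 * π * 𝕚 * ω₁ / ω₂) ^ jk.1 *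
          Complex.exp (2 * π * 𝕚 * ω₃ / ω₂) ^ jk.2) *
      (1 - Complex.exp (-(2 * π * 𝕚 * u / ω₁)) * Complex.exp (-(2 * π * 𝕚 * ω₂ / ω₁)) ^ jk.1 *
          Complex.exp (2 * π * 𝕚 * ω₃ / ω₁) ^ (jk.2 + 1)))

noncomputable def qPoch₂ (c r s : ℂ) : ℂ := ∏' jk : ℕ × ℕ, (1 - c * r ^ jk.1 * s ^ jk.2)

theorem tprod_nat_prod_eq_mul_tprod_succ {M : Type*} [CommMonoid M] [TopologicalSpace M]
    [ContinuousMul M] [T3Space M] {f : ℕ × ℕ → M} (hf : Multipliable f)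
    (hsucc : Multipliable fun jk : ℕ × ℕ => f (jk.1 + 1, jk.2))
    (hfiber : ∀ j, Multipliable fun k => f (j, k)) :
    ∏' jk, f jk = (∏' k, f (0, k)) * ∏' jk : ℕ × ℕ, f (jk.1 + 1, jk.2) := by
  have hsucc_fiber : ∀ j, Multipliable fun k => f (j + 1, k) := fun j => hfiber (j + 1)
  rw [hf.tprod_prod' hfiber, hsucc.tprod_prod' hsucc_fiber]
  exact tprod_eq_zero_mul'
    (hsucc.hasProd.prod_fiberwise fun j => (hsucc_fiber j).hasProd).multipliable

section

variable {c r s : ℂ}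

theorem summable_norm_mul_pow_mul_pow (hr : ‖r‖ < 1) (hs : ‖s‖ < 1) :
    Summable fun jk : ℕ × ℕ => ‖c * r ^ jk.1 * s ^ jk.2‖ := by
  have hgeom := summable_mul_of_summable_norm (R := ℝ)
    (summable_geometric_of_lt_one (norm_nonneg r) hr).norm
    (summable_geometric_of_lt_one (norm_nonneg s) hs).norm
  simpa [mul_assoc] using hgeom.mul_left ‖c‖

theorem multipliable_one_sub_mul_pow (hs : ‖s‖ < 1) :
    Multipliable fun k : ℕ => 1 - c * s ^ k := by
  simpa [sub_eq_add_neg] using Complex.multipliable_one_add_of_summable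
    ((summable_geometric_of_norm_lt_one hs).mul_left (-c))

theorem multipliable_one_sub_mul_pow_mul_pow (hr : ‖r‖ < 1) (hs : ‖s‖ < 1) :
    Multipliable fun jk : ℕ × ℕ => 1 - c * r ^ jk.1 * s ^ jk.2 := by
  simpa [sub_eq_add_neg] using multipliable_one_add_of_summable (f := fun jk : ℕ × ℕ =>
    -(c * r ^ jk.1 * s ^ jk.2)) (by simpa using summable_norm_mul_pow_mul_pow hr hs)

theorem qPoch₂_ne_zero (hr : ‖r‖ < 1) (hs : ‖s‖ < 1) (h : ∀ j k : ℕ, c * r ^ j * s ^ k ≠ 1) :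
    qPoch₂ c r s ≠ 0 := by
  have := tprod_one_add_ne_zero_of_summable (f := fun jk : ℕ × ℕ => -(c * r ^ jk.1 * s ^ jk.2))
    (fun jk => by rw [← sub_eq_add_neg]; exact sub_ne_zero.mpr (h jk.1 jk.2).symm)
    (by simpa using summable_norm_mul_pow_mul_pow hr hs)
  simpa [qPoch₂, ← sub_eq_add_neg] using this

theorem qPoch₂_eq_qPoch_mul_qPoch₂ (hr : ‖r‖ < 1) (hs : ‖s‖ < 1) :
    qPoch₂ c r s = qPoch c s * qPoch₂ (r * c) r s := by
  rw [qPoch₂, tprod_nat_prod_eq_mul_tprod_succ (multipliable_one_sub_mul_pow_mul_pow hr hs)]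
  · simp only [qPoch, qPoch₂, pow_zero, mul_one, pow_succ]
    congr 1
    exact tprod_congr fun jk => by ring
  · exact (multipliable_one_sub_mul_pow_mul_pow (c := r * c) hr hs).congr fun jk => by ring
  · exact fun j => by simpa only [mul_assoc] using multipliable_one_sub_mul_pow (c := c * r ^ j) hs

end

section

variable {z q p : ℂ}

theorem theta_eq_qPoch_mul_qPoch (hp : ‖p‖ < 1) :
    theta z p = qPoch z p * qPoch (p / z) p := by
  rw [theta, qPoch, qPoch, ← (multipliable_one_sub_mul_pow hp).tprod_mul
    (multipliable_one_sub_mul_pow hp)]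
  exact tprod_congr fun k => by ring

theorem theta_div_left (hp : ‖p‖ < 1) (hp₀ : p ≠ 0) : theta (p / z) p = theta z p := by
  rw [theta_eq_qPoch_mul_qPoch hp, theta_eq_qPoch_mul_qPoch hp, div_div_cancel₀ hp₀, mul_comm]

theorem hasProd_ellGamma_div (hq : ‖q‖ < 1) (hp : ‖p‖ < 1)
    (hz : ∀ j k : ℕ, z * q ^ j * p ^ k ≠ 1) :
    HasProd (fun jk : ℕ × ℕ =>
      (1 - q ^ (jk.1 + 1) * p ^ (jk.2 + 1) / z) / (1 - z * q ^ jk.1 * p ^ jk.2))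
      (qPoch₂ (q * p / z) q p / qPoch₂ z q p) := by
  have hnum := (multipliable_one_sub_mul_pow_mul_pow (c := q * p / z) hq hp).hasProd
  have hden := (multipliable_one_sub_mul_pow_mul_pow (c := z) hq hp).hasProd
  exact (hnum.div₀ hden (qPoch₂_ne_zero hq hp hz)).congr_fun fun jk => by ring

theorem ellGamma_eq_div (hq : ‖q‖ < 1) (hp : ‖p‖ < 1) (hz : ∀ j k : ℕ, z * q ^ j * p ^ k ≠ 1) :
    ellGamma z q p = qPoch₂ (q * p / z) q p / qPoch₂ z q p :=
  (hasProd_ellGamma_div hq hp hz).tprod_eq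

theorem ellGamma_comm : ellGamma z q p = ellGamma z p q := by
  rw [ellGamma, ← (Equiv.prodComm ℕ ℕ).tprod_eq]
  exact tprod_congr fun jk => by
    simp only [Equiv.prodComm_apply, Prod.fst_swap, Prod.snd_swap]
    ring

theorem ellGamma_mul_left (hq : ‖q‖ < 1) (hp : ‖p‖ < 1) (hq₀ : q ≠ 0)
    (hz : ∀ j k : ℕ, z * q ^ j * p ^ k ≠ 1) :
    ellGamma (q * z) q p = theta z p * ellGamma z q p := by
  have hqz : ∀ j k : ℕ, q * z * q ^ j * p ^ k ≠ 1 := fun j k => by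
    simpa only [pow_succ, mul_assoc, mul_left_comm q] using hz (j + 1) k
  have hz₀ := qPoch₂_ne_zero hq hp hz
  rw [qPoch₂_eq_qPoch_mul_qPoch₂ hq hp] at hz₀
  have hpoch₀ : qPoch z p ≠ 0 := left_ne_zero_of_mul hz₀
  rw [ellGamma_eq_div hq hp hz, ellGamma_eq_div hq hp hqz, theta_eq_qPoch_mul_qPoch hp,
    qPoch₂_eq_qPoch_mul_qPoch₂ (c := q * p / (q * z)) hq hp,
    qPoch₂_eq_qPoch_mul_qPoch₂ (c := z) hq hp, mul_div_mul_left p z hq₀, mul_div_assoc']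
  field_simp

theorem ellGamma_mul_right (hq : ‖q‖ < 1) (hp : ‖p‖ < 1) (hp₀ : p ≠ 0)
    (hz : ∀ j k : ℕ, z * q ^ j * p ^ k ≠ 1) :
    ellGamma (p * z) q p = theta z q * ellGamma z q p := by
  rw [ellGamma_comm, ellGamma_mul_left hp hq hp₀ fun j k => by
    simpa only [mul_right_comm z] using hz k j, ← ellGamma_comm]

end

theorem norm_exp_neg_lt_one_of_norm_exp_lt_one {a b : ℂ}
    (h : ‖Complex.exp (2 * π * 𝕚 * a / b)‖ < 1) : ‖Complex.exp (-(2 * π * 𝕚 * b / a))‖ < 1 := by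
  have hre : ∀ τ : ℂ, (2 * π * 𝕚 * τ).re = -(2 * Real.pi * τ.im) := fun τ => by
    simp [Complex.mul_re, Complex.mul_im]
  rw [mul_div_assoc, Complex.norm_exp, Real.exp_lt_one_iff, hre, neg_lt_zero] at h
  have him : 0 < (a / b).im := pos_of_mul_pos_right h (by positivity)
  have him' : (b / a).im < 0 := by
    rw [← inv_div, Complex.inv_im, neg_div]
    exact neg_neg_of_pos (div_pos him (Complex.normSq_pos.mpr fun h0 => by simp [h0] at him))
  rw [mul_div_assoc, ← neg_mul, Complex.norm_exp, Real.exp_lt_one_iff, neg_mul, Complex.neg_re,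
    hre, neg_neg]
  exact mul_neg_of_pos_of_neg (by positivity) him'

theorem exp_two_pi_I_add_div (u v w : ℂ) :
    Complex.exp (2 * π * 𝕚 * (u + v) / w) =
      Complex.exp (2 * π * 𝕚 * u / w) * Complex.exp (2 * π * 𝕚 * v / w) := by
  rw [← Complex.exp_add]
  congr 1
  ring

theorem exp_two_pi_I_div_self {w : ℂ} (hw : w ≠ 0) : Complex.exp (2 * π * 𝕚 * w / w) = 1 := by
  rw [mul_div_cancel_right₀ _ hw, Complex.exp_two_pi_mul_I]

theorem Gell_eq_ellGamma_mul_ellGamma {ω₁ ω₂ ω₃ v : ℂ}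
    (hq : ‖Complex.exp (2 * π * 𝕚 * ω₁ / ω₂)‖ < 1)
    (hp : ‖Complex.exp (2 * π * 𝕚 * ω₃ / ω₂)‖ < 1)
    (hqt : ‖Complex.exp (-(2 * π * 𝕚 * ω₂ / ω₁))‖ < 1)
    (hpt : ‖Complex.exp (2 * π * 𝕚 * ω₃ / ω₁)‖ < 1)
    (hden : ∀ j k : ℕ,
        Complex.exp (2 * π * 𝕚 * v / ω₂) * Complex.exp (2 * π * 𝕚 * ω₁ / ω₂) ^ j *
            Complex.exp (2 * π * 𝕚 * ω₃ / ω₂) ^ k ≠ 1 ∧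
        Complex.exp (-(2 * π * 𝕚 * v / ω₁)) * Complex.exp (-(2 * π * 𝕚 * ω₂ / ω₁)) ^ j *
            Complex.exp (2 * π * 𝕚 * ω₃ / ω₁) ^ k ≠ 1) :
    Gell ω₁ ω₂ ω₃ v =
      ellGamma (Complex.exp (2 * π * 𝕚 * v / ω₂)) (Complex.exp (2 * π * 𝕚 * ω₁ / ω₂))
          (Complex.exp (2 * π * 𝕚 * ω₃ / ω₂)) *
        ellGamma (Complex.exp (2 * π * 𝕚 * ω₃ / ω₁) / Complex.exp (2 * π * 𝕚 * v / ω₁))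
          (Complex.exp (-(2 * π * 𝕚 * ω₂ / ω₁))) (Complex.exp (2 * π * 𝕚 * ω₃ / ω₁)) := by
  simp only [Complex.exp_neg (2 * π * 𝕚 * v / ω₂), Complex.exp_neg (2 * π * 𝕚 * v / ω₁), Gell]
    at hden ⊢
  set x := Complex.exp (2 * π * 𝕚 * v / ω₂)
  set y := Complex.exp (2 * π * 𝕚 * v / ω₁)
  set pt := Complex.exp (2 * π * 𝕚 * ω₃ / ω₁)
  have hpt₀ : pt ≠ 0 := Complex.exp_ne_zero _
  have h₁ := (hasProd_ellGamma_div hq hp fun j k => (hden j k).1).multipliable.hasProd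
  have h₂ := (hasProd_ellGamma_div (z := pt / y) hqt hpt fun j k h => (hden j (k + 1)).2
    (by rw [← h]; ring)).multipliable.hasProd
  refine ((h₁.mul h₂).congr_fun fun jk => ?_).tprod_eq
  rw [mul_div_mul_comm]
  congr 2 <;> field_simp <;> ring

theorem Gell_difference_equations_general (ω₁ ω₂ ω₃ : ℂ)
    (hω₁ : ω₁ ≠ 0) (hω₂ : ω₂ ≠ 0)
    (hq : ‖Complex.exp (2 * π * 𝕚 * ω₁ / ω₂)‖ < 1)
    (hp : ‖Complex.exp (2 * π * 𝕚 * ω₃ / ω₂)‖ < 1)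
    (hpt : ‖Complex.exp (2 * π * 𝕚 * ω₃ / ω₁)‖ < 1)
    (u : ℂ)
    (hden : ∀ v : ℂ, (v = u ∨ v = u + ω₁ ∨ v = u + ω₂ ∨ v = u + ω₃) →
      ∀ j k : ℕ,
        Complex.exp (2 * π * 𝕚 * v / ω₂) * Complex.exp (2 * π * 𝕚 * ω₁ / ω₂) ^ j *
            Complex.exp (2 * π * 𝕚 * ω₃ / ω₂) ^ k ≠ 1 ∧
        Complex.exp (-(2 * π * 𝕚 * v / ω₁)) * Complex.exp (-(2 * π * 𝕚 * ω₂ / ω₁)) ^ j *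
            Complex.exp (2 * π * 𝕚 * ω₃ / ω₁) ^ k ≠ 1)
    (hθ : theta (Complex.exp (2 * π * 𝕚 * u / ω₁) * Complex.exp (-(2 * π * 𝕚 * ω₂ / ω₁)))
        (Complex.exp (-(2 * π * 𝕚 * ω₂ / ω₁))) ≠ 0) :
    Gell ω₁ ω₂ ω₃ (u + ω₁) =
        theta (Complex.exp (2 * π * 𝕚 * u / ω₂)) (Complex.exp (2 * π * 𝕚 * ω₃ / ω₂)) *
          Gell ω₁ ω₂ ω₃ u ∧
    Gell ω₁ ω₂ ω₃ (u + ω₂) =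
        theta (Complex.exp (2 * π * 𝕚 * u / ω₁)) (Complex.exp (2 * π * 𝕚 * ω₃ / ω₁)) *
          Gell ω₁ ω₂ ω₃ u ∧
    Gell ω₁ ω₂ ω₃ (u + ω₃) =
        theta (Complex.exp (2 * π * 𝕚 * u / ω₂)) (Complex.exp (2 * π * 𝕚 * ω₁ / ω₂)) /
          theta (Complex.exp (2 * π * 𝕚 * u / ω₁) * Complex.exp (-(2 * π * 𝕚 * ω₂ / ω₁)))
            (Complex.exp (-(2 * π * 𝕚 * ω₂ / ω₁))) *
          Gell ω₁ ω₂ ω₃ u := by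
  have hqt := norm_exp_neg_lt_one_of_norm_exp_lt_one hq
  have hG := fun v hv => Gell_eq_ellGamma_mul_ellGamma (v := v) hq hp hqt hpt (hden v hv)
  rw [hG u (Or.inl rfl), hG _ (Or.inr (Or.inl rfl)), hG _ (Or.inr (Or.inr (Or.inl rfl))),
    hG _ (Or.inr (Or.inr (Or.inr rfl)))]
  have hx := fun j k => (hden u (Or.inl rfl) j k).1
  have hy := fun j k => (hden u (Or.inl rfl) j k).2
  simp only [exp_two_pi_I_add_div, exp_two_pi_I_div_self hω₁, exp_two_pi_I_div_self hω₂, mul_one,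
    Complex.exp_neg (2 * π * 𝕚 * u / ω₁)] at hy ⊢
  rw [← inv_inv (Complex.exp (2 * π * 𝕚 * ω₂ / ω₁)), ← Complex.exp_neg]
  set x := Complex.exp (2 * π * 𝕚 * u / ω₂)
  set y := Complex.exp (2 * π * 𝕚 * u / ω₁)
  set q := Complex.exp (2 * π * 𝕚 * ω₁ / ω₂)
  set p := Complex.exp (2 * π * 𝕚 * ω₃ / ω₂)
  set qt := Complex.exp (-(2 * π * 𝕚 * ω₂ / ω₁))
  set pt := Complex.exp (2 * π * 𝕚 * ω₃ / ω₁)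
  have hqt₀ : qt ≠ 0 := Complex.exp_ne_zero _
  have hpt₀ : pt ≠ 0 := Complex.exp_ne_zero _
  refine ⟨?_, ?_, ?_⟩
  · rw [mul_comm x q, ellGamma_mul_left hq hp (Complex.exp_ne_zero _) hx, mul_assoc]
  · have hz : ∀ j k : ℕ, pt / y * qt ^ j * pt ^ k ≠ 1 := fun j k h => hy j (k + 1) (by
      rw [← h]; ring)
    rw [show pt / (y * qt⁻¹) = qt * (pt / y) by field_simp, ellGamma_mul_left hqt hpt hqt₀ hz,
      theta_div_left hpt hpt₀]
    ring
  · rw [mul_comm x p, ellGamma_mul_right hq hp (Complex.exp_ne_zero _) hx,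
      show pt / (y * pt) = y⁻¹ by field_simp, div_eq_mul_inv pt y,
      ellGamma_mul_right hqt hpt hpt₀ hy, ← theta_div_left hqt hqt₀ (z := y⁻¹), div_inv_eq_mul,
      mul_comm qt y]
    field_simp

/-- The three difference equations satisfied by the modified elliptic gamma function `G`. -/
theorem Gell_difference_equations (ω₁ ω₂ ω₃ : ℂ)
    (hω₁ : ω₁ ≠ 0) (hω₂ : ω₂ ≠ 0) (hω₃ : ω₃ ≠ 0)
    (hq : ‖Complex.exp (2 * π * 𝕚 * ω₁ / ω₂)‖ < 1)
    (hp : ‖Complex.exp (2 * π * 𝕚 * ω₃ / ω₂)‖ < 1)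
    (hpt : ‖Complex.exp (2 * π * 𝕚 * ω₃ / ω₁)‖ < 1)
    (u : ℂ)
    (hden : ∀ v : ℂ, (v = u ∨ v = u + ω₁ ∨ v = u + ω₂ ∨ v = u + ω₃) →
      ∀ j k : ℕ,
        Complex.exp (2 * π * 𝕚 * v / ω₂) * Complex.exp (2 * π * 𝕚 * ω₁ / ω₂) ^ j *
            Complex.exp (2 * π * 𝕚 * ω₃ / ω₂) ^ k ≠ 1 ∧
        Complex.exp (-(2 * π * 𝕚 * v / ω₁)) * Complex.exp (-(2 * π * 𝕚 * ω₂ / ω₁)) ^ j *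
            Complex.exp (2 * π * 𝕚 * ω₃ / ω₁) ^ k ≠ 1)
    (hθ : theta (Complex.exp (2 * π * 𝕚 * u / ω₁) * Complex.exp (-(2 * π * 𝕚 * ω₂ / ω₁)))
        (Complex.exp (-(2 * π * 𝕚 * ω₂ / ω₁))) ≠ 0) :
    Gell ω₁ ω₂ ω₃ (u + ω₁) =
        theta (Complex.exp (2 * π * 𝕚 * u / ω₂)) (Complex.exp (2 * π * 𝕚 * ω₃ / ω₂)) *
          Gell ω₁ ω₂ ω₃ u ∧
    Gell ω₁ ω₂ ω₃ (u + ω₂) =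
        theta (Complex.exp (2 * π * 𝕚 * u / ω₁)) (Complex.exp (2 * π * 𝕚 * ω₃ / ω₁)) *
          Gell ω₁ ω₂ ω₃ u ∧
    Gell ω₁ ω₂ ω₃ (u + ω₃) =
        theta (Complex.exp (2 * π * 𝕚 * u / ω₂)) (Complex.exp (2 * π * 𝕚 * ω₁ / ω₂)) /
          theta (Complex.exp (2 * π * 𝕚 * u / ω₁) * Complex.exp (-(2 * π * 𝕚 * ω₂ / ω₁)))
            (Complex.exp (-(2 * π * 𝕚 * ω₂ / ω₁))) *
          Gell ω₁ ω₂ ω₃ u :=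
  Gell_difference_equations_general ω₁ ω₂ ω₃ hω₁ hω₂ hq hp hpt u hden hθ
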